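/- In the wrong-extended big-step semantics, c ⇒ r with r ∈ R is inductively derivable if and only if c ⇒ r is inductively derivable in the original rules (adding the wrong result is conservative over convergence). -/

import Mathlib

/-- Judgements over configurations `C` and extended results `Option R`
    (`none` stands for the special extra result such as `?`, `wrong`, or `∞`). -/
abbrev Judg (C R : Type) := C × Option R

/-- Lift a complete judgement to an extended judgement. -/
def liftJ {C R : Type} (j : C × R) : Judg C R := (j.1, some j.2)

/-- Bounded-premises condition. -/
def BP {C R : Type} (Rules : Set (List (C × R) × (C × R))) : Prop :=
  ∀ c : C, ∃ b : ℕ, ∀ js res, (js, (c, res)) ∈ Rules → js.length ≤ b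

/-- The extended rule set `Rules_?`: original rules (lifted), start axioms
    `c ⇒ ?`, and partial rules. -/
def RulesQ {C R : Type} (Rules : Set (List (C × R) × (C × R))) :
    Set (List (Judg C R) × Judg C R) :=
  { r | (∃ c : C, r = ([], (c, none)))
      ∨ (∃ (js : List (C × R)) (c : C) (res : R), (js, (c, res)) ∈ Rules ∧ r = (js.map liftJ, (c, some res)))
      ∨ (∃ (js : List (C × R)) (c : C) (res : R) (i : ℕ) (hi : i < js.length) (u : Option R),
          (js, (c, res)) ∈ Rules ∧
          r = ((js.take i).map liftJ ++ [((js[i]'hi).1, u)], (c, none))) }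

/-- Ordered trees labelled in `L`: partial functions from positions (lists of
    child indices) to labels, with nonempty, prefix-closed,
    sibling-downward-closed domain. -/
structure OTree (L : Type) where
  label : List ℕ → Option L
  root_isSome : (label []).isSome
  pref : ∀ α n, (label (α ++ [n])).isSome → (label α).isSome
  sib : ∀ α n k, (label (α ++ [n])).isSome → k ≤ n → (label (α ++ [k])).isSome

/-- A tree is an evaluation tree in a rule set: at every node, the ordered
    children labels together with the node label form a rule. -/
def IsTreeIn {L : Type} (Rules : Set (List L × L)) (t : OTree L) : Prop :=
  ∀ α l, t.label α = some l →
    ∃ ps : List L, (∀ i : ℕ, t.label (α ++ [i]) = ps[i]?) ∧ (ps, l) ∈ Rules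

/-- Partial evaluation trees: evaluation trees in `Rules_?`. -/
def IsPET {C R : Type} (Rules : Set (List (C × R) × (C × R)))
    (t : OTree (Judg C R)) : Prop :=
  IsTreeIn (RulesQ Rules) t

/-- The refinement relation `⊑` on trees labelled by possibly-incomplete
    judgements. -/
def TreeLE {C R : Type} (t t' : OTree (Judg C R)) : Prop :=
  (∀ α, (t.label α).isSome → (t'.label α).isSome) ∧
  ∀ α c u, t.label α = some (c, u) →
    (∃ (u' : Option R), t'.label α = some (c, u')) ∧
    (u.isSome → ∀ β, t.label (α ++ β) = t'.label (α ++ β))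

/-- Strict refinement `⊏`. -/
def TreeLT {C R : Type} (t t' : OTree (Judg C R)) : Prop :=
  TreeLE t t' ∧ t ≠ t'

/-- A tree is finite if its domain is finite. -/
def TreeFinite {L : Type} (t : OTree L) : Prop :=
  Set.Finite {α | (t.label α).isSome}

/-- Well-formedness: every subtree rooted at a complete node is finite. -/
def WellFormed {C R : Type} (t : OTree (Judg C R)) : Prop :=
  ∀ α c r, t.label α = some (c, some r) →
    Set.Finite {β | (t.label (α ++ β)).isSome}

/-- `t` is a least upper bound of the sequence `f` w.r.t. `⊑`. -/
def IsLubSeq {C R : Type} (f : ℕ → OTree (Judg C R)) (t : OTree (Judg C R)) : Prop :=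
  (∀ n, TreeLE (f n) t) ∧ ∀ t', (∀ n, TreeLE (f n) t') → TreeLE t t'

/-- Inductive derivability in a rule set with finite-list premises. -/
inductive IndDerives {J : Type} (Rules : Set (List J × J)) : J → Prop where
  | node (ps : List J) (j : J) : (ps, j) ∈ Rules →
      (∀ p ∈ ps, IndDerives Rules p) → IndDerives Rules j

/-- A set of judgements is consistent w.r.t. a rule set. -/
def ConsistentL {J : Type} (Rules : Set (List J × J)) (X : Set J) : Prop :=
  ∀ j ∈ X, ∃ (ps : List J), (ps, j) ∈ Rules ∧ ∀ p ∈ ps, p ∈ X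

/-- Coinductive derivability: membership in some consistent set. -/
def CoDerives {J : Type} (Rules : Set (List J × J)) (j : J) : Prop :=
  ∃ (X : Set J), ConsistentL Rules X ∧ j ∈ X

/-- Derivability in a generalised inference system (rules + corules):
    membership in a consistent set all of whose elements have a finite
    derivation using both rules and corules. -/
def GenDerives {J : Type} (rules corules : Set (List J × J)) (j : J) : Prop :=
  ∃ (X : Set J), ConsistentL rules X ∧ (∀ x ∈ X, IndDerives (rules ∪ corules) x) ∧ j ∈ X
/-- Trace results: a finite trace paired with a result, or an infinite trace. -/
abbrev TrRes (C R : Type) := (List C × R) ⊕ Stream' C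

/-- The trace-extended rule set `Rules_tr`: finite-trace rules and
    infinite-trace rules. -/
def RulesTr {C R : Type} (Rules : Set (List (C × R) × (C × R))) :
    Set (List (C × TrRes C R) × (C × TrRes C R)) :=
  { r | (∃ (js : List (C × R)) (c : C) (res : R) (σs : List (List C)),
          (js, (c, res)) ∈ Rules ∧ σs.length = js.length ∧
          r = ((js.zip σs).map (fun p => (p.1.1, Sum.inl (p.2, p.1.2))),
               (c, Sum.inl (c :: σs.flatten, res))))
      ∨ (∃ (js : List (C × R)) (c : C) (res : R) (i : ℕ) (hi : i < js.length)
            (σs : List (List C)) (σ : Stream' C),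
          (js, (c, res)) ∈ Rules ∧ σs.length = i ∧
          r = (((js.take i).zip σs).map (fun p => (p.1.1, Sum.inl (p.2, p.1.2))) ++
                 [((js[i]'hi).1, Sum.inr σ)],
               (c, Sum.inr ((c :: σs.flatten) ++ₛ σ)))) }

/-- Equality of rules up to an index `i`: same conclusion configuration, same
    first `i` premises, same configuration in the `(i+1)`-th premise
    (`i` is 0-based here), with a prescribed result `r'` in that premise. -/
def AgreeUpTo {C R : Type} (Rules : Set (List (C × R) × (C × R)))
    (js : List (C × R)) (c : C) (i : ℕ) (hi : i < js.length) (r' : R) : Prop :=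
  ∃ (js' : List (C × R)) (res' : R) (hi' : i < js'.length),
    (js', (c, res')) ∈ Rules ∧ js'.take i = js.take i ∧
    (js'[i]'hi').1 = (js[i]'hi).1 ∧ (js'[i]'hi').2 = r'

/-- The wrong-extended rule set `Rules_wr` over results `R + {wrong}`
    (`none` stands for `wrong`): original rules, wrong-configuration axioms,
    wrong-result rules and wrong-propagation rules. -/
def RulesWr {C R : Type} (Rules : Set (List (C × R) × (C × R))) :
    Set (List (Judg C R) × Judg C R) :=
  { r | (∃ (js : List (C × R)) (c : C) (res : R),
          (js, (c, res)) ∈ Rules ∧ r = (js.map liftJ, (c, some res)))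
      ∨ (∃ (c : C), (¬ ∃ (js : List (C × R)) (res : R), (js, (c, res)) ∈ Rules) ∧
          r = ([], (c, none)))
      ∨ (∃ (js : List (C × R)) (c : C) (res : R) (i : ℕ) (hi : i < js.length) (r' : R),
          (js, (c, res)) ∈ Rules ∧ ¬ AgreeUpTo Rules js c i hi r' ∧
          r = ((js.take i).map liftJ ++ [((js[i]'hi).1, some r')], (c, none)))
      ∨ (∃ (js : List (C × R)) (c : C) (res : R) (i : ℕ) (hi : i < js.length),
          (js, (c, res)) ∈ Rules ∧
          r = ((js.take i).map liftJ ++ [((js[i]'hi).1, none)], (c, none))) }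

/-- The divergence-extended rule set `Rules_∞` over results `R + {∞}`
    (`none` stands for `∞`): original rules plus divergence-propagation
    rules. -/
def RulesInf {C R : Type} (Rules : Set (List (C × R) × (C × R))) :
    Set (List (Judg C R) × Judg C R) :=
  { r | (∃ (js : List (C × R)) (c : C) (res : R),
          (js, (c, res)) ∈ Rules ∧ r = (js.map liftJ, (c, some res)))
      ∨ (∃ (js : List (C × R)) (c : C) (res : R) (i : ℕ) (hi : i < js.length),
          (js, (c, res)) ∈ Rules ∧
          r = ((js.take i).map liftJ ++ [((js[i]'hi).1, none)], (c, none))) }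

/-- The coaxioms for divergence: `c ⇒ ∞` for every configuration `c`. -/
def CoAx (C R : Type) : Set (List (Judg C R) × Judg C R) :=
  { r | ∃ (c : C), r = ([], (c, none)) }

/-- The trace-forgetting map: `(σ, r) ↦ r` and `σ^∞ ↦ ∞`. -/
def uForget {C R : Type} : TrRes C R → Option R :=
  Sum.elim (fun p => some p.2) (fun _ => none)

theorem IndDerives.map {J J' : Type} {Rules : Set (List J × J)} {Rules' : Set (List J' × J')}
    (f : J → J') (hf : ∀ ps j, (ps, j) ∈ Rules → (ps.map f, f j) ∈ Rules') {j : J}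
    (h : IndDerives Rules j) : IndDerives Rules' (f j) := by
  induction h with
  | node ps j hrule _ ih =>
    refine .node (ps.map f) (f j) (hf ps j hrule) ?_
    simpa only [List.forall_mem_map] using ih

theorem IndDerives.of_map {J J' : Type} {Rules : Set (List J × J)} {Rules' : Set (List J' × J')}
    (f : J → J') (hf : ∀ qs j, (qs, f j) ∈ Rules' → ∃ ps, (ps, j) ∈ Rules ∧ qs = ps.map f)
    {j : J} (h : IndDerives Rules' (f j)) : IndDerives Rules j := by
  generalize hj : f j = j' at h
  induction h generalizing j with
  | node qs j' hrule _ ih =>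
    subst hj
    obtain ⟨ps, hps, rfl⟩ := hf qs j hrule
    exact .node ps j hps fun p hp => ih (f p) (List.mem_map_of_mem hp) rfl

theorem map_liftJ_mem_rulesWr {C R : Type} {Rules : Set (List (C × R) × (C × R))}
    {js : List (C × R)} {j : C × R} (h : (js, j) ∈ Rules) :
    (js.map liftJ, liftJ j) ∈ RulesWr Rules :=
  Or.inl ⟨js, j.1, j.2, h, rfl⟩

theorem exists_eq_map_liftJ_of_mem_rulesWr {C R : Type} {Rules : Set (List (C × R) × (C × R))}
    {qs : List (Judg C R)} {j : C × R} (h : (qs, liftJ j) ∈ RulesWr Rules) :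
    ∃ js, (js, j) ∈ Rules ∧ qs = js.map liftJ := by
  rcases h with ⟨js, c, res, hjs, heq⟩ | ⟨_, _, heq⟩ | ⟨_, _, _, _, _, _, _, _, heq⟩ |
    ⟨_, _, _, _, _, _, heq⟩
  · simp only [liftJ, Prod.mk.injEq, Option.some.injEq] at heq
    obtain ⟨rfl, rfl, rfl⟩ := heq
    exact ⟨js, hjs, rfl⟩
  all_goals simp [liftJ] at heq

theorem wrong_conservative {C R : Type}
    (Rules : Set (List (C × R) × (C × R))) (c : C) (r : R) :
    IndDerives (RulesWr Rules) ((c, some r) : Judg C R) ↔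
      IndDerives Rules (c, r) :=
  ⟨IndDerives.of_map (j := (c, r)) liftJ fun _ _ => exists_eq_map_liftJ_of_mem_rulesWr,
    IndDerives.map liftJ fun _ _ => map_liftJ_mem_rulesWr⟩
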